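/- The average of the forward and reverse first-order formulas is a second-order approximation: Let H_1, ..., H_L be d×d Hermitian matrices, and define D(λ) := exp(λ Σ_{j=1}^L H_j) − ½(exp(λH_1)exp(λH_2)⋯exp(λH_L) + exp(λH_L)⋯exp(λH_2)exp(λH_1)). Then the s-th complex derivative of the matrix-valued function λ ↦ D(λ) at λ = 0 vanishes for s = 0, 1, and 2. -/

import Mathlib

set_option linter.unusedSectionVars false
set_option linter.unusedVariables false

open NormedSpace

section Aux

variable {𝔸 : Type*} [NormedRing 𝔸] [NormedAlgebra ℂ 𝔸] [CompleteSpace 𝔸]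

/-- Product of exponentials along a list. -/
noncomputable def expListProd : List 𝔸 → ℂ → 𝔸
  | [], _ => 1
  | A :: l, lam => exp (lam • A) * expListProd l lam

noncomputable def expListProd₁ : List 𝔸 → ℂ → 𝔸
  | [], _ => 0
  | A :: l, lam =>
      A * exp (lam • A) * expListProd l lam + exp (lam • A) * expListProd₁ l lam

noncomputable def expListProd₂ : List 𝔸 → ℂ → 𝔸
  | [], _ => 0
  | A :: l, lam =>
      (A * (A * exp (lam • A)) * expListProd l lam
        + A * exp (lam • A) * expListProd₁ l lam)
      + (A * exp (lam • A) * expListProd₁ l lam + exp (lam • A) * expListProd₂ l lam)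

theorem hasDerivAt_expListProd (l : List 𝔸) (lam : ℂ) :
    HasDerivAt (expListProd l) (expListProd₁ l lam) lam := by
  induction l with
  | nil => simpa [expListProd, expListProd₁] using hasDerivAt_const lam (1 : 𝔸)
  | cons A l ih =>
      simpa [expListProd, expListProd₁, Pi.mul_def] using
        (hasDerivAt_exp_smul_const' A lam).mul ih

theorem hasDerivAt_expListProd₁ (l : List 𝔸) (lam : ℂ) :
    HasDerivAt (expListProd₁ l) (expListProd₂ l lam) lam := by
  induction l with
  | nil => simpa [expListProd₁, expListProd₂] using hasDerivAt_const lam (0 : 𝔸)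
  | cons A l ih =>
      have h1 : HasDerivAt (fun lam : ℂ => A * exp (lam • A))
          (A * (A * exp (lam • A))) lam :=
        (hasDerivAt_exp_smul_const' A lam).const_mul A
      simpa [expListProd₁, expListProd₂, mul_assoc, Pi.mul_def, Pi.add_def] using
        (h1.mul (hasDerivAt_expListProd l lam)).add
          ((hasDerivAt_exp_smul_const' A lam).mul ih)

@[simp] theorem expListProd_zero (l : List 𝔸) : expListProd l 0 = 1 := by
  induction l with
  | nil => rfl
  | cons A l ih => simp [expListProd, ih]

theorem expListProd₁_zero (l : List 𝔸) : expListProd₁ l 0 = l.sum := by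
  induction l with
  | nil => rfl
  | cons A l ih => simp [expListProd₁, ih]

theorem expListProd₂_zero (l : List 𝔸) (A : 𝔸) :
    expListProd₂ (A :: l) 0 = A * A + A * l.sum + A * l.sum + expListProd₂ l 0 := by
  simp [expListProd₂, expListProd₁_zero]
  abel

theorem expListProd₂_zero_append (l : List 𝔸) (A : 𝔸) :
    expListProd₂ (l ++ [A]) 0 = expListProd₂ l 0 + l.sum * A + l.sum * A + A * A := by
  induction l with
  | nil => simp [expListProd₂_zero]; abel
  | cons B l ih =>
      rw [List.cons_append, expListProd₂_zero, ih, expListProd₂_zero]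
      simp [List.sum_append]
      noncomm_ring

theorem expListProd₂_rev (l : List 𝔸) :
    expListProd₂ l 0 + expListProd₂ l.reverse 0 = l.sum * l.sum + l.sum * l.sum := by
  induction l with
  | nil => simp [expListProd₂]
  | cons A l ih =>
      rw [expListProd₂_zero, List.reverse_cons, expListProd₂_zero_append,
        List.sum_reverse, List.sum_cons]
      have h : expListProd₂ l.reverse 0 = l.sum * l.sum + l.sum * l.sum - expListProd₂ l 0 := by
        rw [← ih]; abel
      rw [h]
      noncomm_ring

theorem expListProd_eq (l : List 𝔸) (lam : ℂ) :
    expListProd l lam = (l.map fun A => exp (lam • A)).prod := by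
  induction l with
  | nil => rfl
  | cons A l ih => simp [expListProd, ih]

end Aux

theorem ofFn_rev' {α : Type*} {n : ℕ} (f : Fin n → α) :
    (List.ofFn fun i : Fin n => f i.rev) = (List.ofFn f).reverse := by
  apply List.ext_getElem
  · simp
  · intro i h1 h2
    simp [List.getElem_reverse, List.getElem_ofFn, Fin.rev]
    congr 1
    exact Fin.ext (by simp; omega)


open scoped Matrix.Norms.L2Operator ComplexOrder
open Matrix


open scoped Matrix.Norms.L2Operator ComplexOrder
open Matrix

/-- **The average of the forward and reverse first-order formulas is a second-order
approximation**: the `s`-th complex derivative at `λ = 0` of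
`D(λ) = exp(λ Σ_j H_j) - ½(exp(λH₁)⋯exp(λH_L) + exp(λH_L)⋯exp(λH₁))`
vanishes for `s = 0, 1, 2`. -/
theorem averaged_first_order_is_second_order {d L : ℕ}
    (H : Fin L → Matrix (Fin d) (Fin d) ℂ) (hH : ∀ j, (H j).IsHermitian) :
    ∀ s : ℕ, s ≤ 2 →
      iteratedDeriv s (fun lam : ℂ =>
        NormedSpace.exp (lam • ∑ j, H j) -
          (2 : ℂ)⁻¹ • ((List.ofFn fun j => NormedSpace.exp (lam • H j)).prod +
            (List.ofFn fun j : Fin L => NormedSpace.exp (lam • H j.rev)).prod)) 0 = 0 := by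
  set S : Matrix (Fin d) (Fin d) ℂ := ∑ j, H j with hS
  set l : List (Matrix (Fin d) (Fin d) ℂ) := List.ofFn H with hl
  have hsum : l.sum = S := by simp [hl, hS, List.sum_ofFn]
  have key : ∀ lam : ℂ, (List.ofFn fun j => exp (lam • H j)).prod = expListProd l lam := by
    intro lam
    rw [expListProd_eq, hl, List.map_ofFn]
    rfl
  have key2 : ∀ lam : ℂ,
      (List.ofFn fun j : Fin L => exp (lam • H j.rev)).prod
        = expListProd l.reverse lam := by
    intro lam
    rw [expListProd_eq, List.map_reverse, hl, List.map_ofFn,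
      show (List.ofFn fun j : Fin L => exp (lam • H j.rev))
          = (List.ofFn fun j => exp (lam • H j)).reverse from
        ofFn_rev' (fun j => exp (lam • H j))]
    rfl
  have hfun : (fun lam : ℂ =>
        exp (lam • S) -
          (2 : ℂ)⁻¹ • ((List.ofFn fun j => exp (lam • H j)).prod +
            (List.ofFn fun j : Fin L => exp (lam • H j.rev)).prod))
      = fun lam : ℂ => exp (lam • S) -
          (2 : ℂ)⁻¹ • (expListProd l lam + expListProd l.reverse lam) := by
    funext lam
    rw [key, key2]
  have half : ∀ x : Matrix (Fin d) (Fin d) ℂ, (2 : ℂ)⁻¹ • (x + x) = x := by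
    intro x
    rw [← two_smul ℂ x, smul_smul, inv_mul_cancel₀ (two_ne_zero), one_smul]
  have hF0 : ∀ lam : ℂ, HasDerivAt
      (fun lam : ℂ => exp (lam • S) -
        (2 : ℂ)⁻¹ • (expListProd l lam + expListProd l.reverse lam))
      (S * exp (lam • S) -
        (2 : ℂ)⁻¹ • (expListProd₁ l lam + expListProd₁ l.reverse lam)) lam := by
    intro lam
    exact (hasDerivAt_exp_smul_const' S lam).sub
      (((hasDerivAt_expListProd l lam).add
        (hasDerivAt_expListProd l.reverse lam)).const_smul ((2 : ℂ)⁻¹))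
  have hF1 : ∀ lam : ℂ, HasDerivAt
      (fun lam : ℂ => S * exp (lam • S) -
        (2 : ℂ)⁻¹ • (expListProd₁ l lam + expListProd₁ l.reverse lam))
      (S * (S * exp (lam • S)) -
        (2 : ℂ)⁻¹ • (expListProd₂ l lam + expListProd₂ l.reverse lam)) lam := by
    intro lam
    exact ((hasDerivAt_exp_smul_const' S lam).const_mul S).sub
      (((hasDerivAt_expListProd₁ l lam).add
        (hasDerivAt_expListProd₁ l.reverse lam)).const_smul ((2 : ℂ)⁻¹))
  have hd0 : deriv (fun lam : ℂ => exp (lam • S) -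
        (2 : ℂ)⁻¹ • (expListProd l lam + expListProd l.reverse lam))
      = fun lam : ℂ => S * exp (lam • S) -
        (2 : ℂ)⁻¹ • (expListProd₁ l lam + expListProd₁ l.reverse lam) :=
    funext fun lam => (hF0 lam).deriv
  intro s hs
  rw [hfun]
  interval_cases s
  · rw [iteratedDeriv_zero]
    simp only [zero_smul, NormedSpace.exp_zero, expListProd_zero]
    rw [half, sub_self]
  · rw [iteratedDeriv_one, hd0]
    simp only [zero_smul, NormedSpace.exp_zero, mul_one, expListProd₁_zero,
      List.sum_reverse, hsum]
    rw [half, sub_self]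
  · rw [show (2 : ℕ) = 1 + 1 from rfl, iteratedDeriv_succ, iteratedDeriv_one, hd0,
      (hF1 0).deriv]
    have hQ := expListProd₂_rev l
    rw [hsum] at hQ
    simp only [zero_smul, NormedSpace.exp_zero, mul_one, hQ]
    rw [half, sub_self]
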